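/- Let g, W : ℝⁿ → ℝ with g nonnegative and locally Lipschitz continuous, and W convex with superlinear growth (W(x)/‖x‖ → +∞ as ‖x‖ → +∞). Then for almost every (h, x) ∈ (0, ∞) × ℝⁿ, the Hamilton–Jacobi equation holds: ∂_h Q_h^W(g)(x) = −W*(∇_x Q_h^W(g)(x)). -/

import Mathlib

open Filter MeasureTheory Bornology RealInnerProductSpace
open Metric Set Topology

/-!
Write `Q(h, x) = ⨅ y, g (x - h y) + h W(y)`. Convexity of `W` gives the sub-solution inequality
`Q(h + s, x + s q) ≤ Q(h, x) + s W(q)`, and along the backward characteristic through a minimizer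
`y₀` of `Q(h, x)` one has `Q(h - t, x - t y₀) ≤ Q(h, x) - t W(y₀)`. At a point of
differentiability the first yields `∂ₕQ + ⟪q, ∇ₓQ⟫ ≤ W(q)` for every `q`, the second the reverse
inequality at `q = y₀`; together, `∂ₕQ = -W*(∇ₓQ)`.

Differentiability almost everywhere is Rademacher's theorem: superlinear growth of `W` confines
the minimizers to a ball, uniformly on compact subsets of `(0, ∞) × E`, so there `Q` is an infimum
of uniformly Lipschitz functions each of which attains it, hence Lipschitz.
-/

noncomputable def hopfLax {E : Type*} [AddCommGroup E] [Module ℝ E] (g W : E → ℝ) (h : ℝ)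
    (x : E) : ℝ :=
  ⨅ y, g (x - h • y) + h * W y

def IsHopfLaxMinimizer {E : Type*} [AddCommGroup E] [Module ℝ E] (g W : E → ℝ) (h : ℝ)
    (x y₀ : E) : Prop :=
  ∀ y, g (x - h • y₀) + h * W y₀ ≤ g (x - h • y) + h * W y

theorem LipschitzOnWith.of_forall_le_of_exists_eq {α ι : Type*} [PseudoMetricSpace α]
    {f : α → ℝ} {φ : ι → α → ℝ} {s : Set α} {K : NNReal} (hle : ∀ i, ∀ x ∈ s, f x ≤ φ i x)
    (heq : ∀ x ∈ s, ∃ i, f x = φ i x ∧ LipschitzOnWith K (φ i) s) :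
    LipschitzOnWith K f s :=
  LipschitzOnWith.of_le_add_mul K fun x hx y hy => by
    obtain ⟨i, hi, hφ⟩ := heq y hy
    exact hi ▸ (hle i x hx).trans (hφ.le_add_mul hx hy)

theorem LocallyLipschitzOn.ae_differentiableAt {E F : Type*} [NormedAddCommGroup E]
    [NormedSpace ℝ E] [FiniteDimensional ℝ E] [MeasurableSpace E] [BorelSpace E]
    {μ : Measure E} [μ.IsAddHaarMeasure] [NormedAddCommGroup F] [NormedSpace ℝ F]
    [FiniteDimensional ℝ F] {f : E → F} {U : Set E} (hU : IsOpen U)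
    (hf : LocallyLipschitzOn U f) : ∀ᵐ x ∂μ, x ∈ U → DifferentiableAt ℝ f x := by
  have hf' : ∀ x ∈ U, ∃ K, ∃ t ∈ 𝓝[U] x, LipschitzOnWith K f t := fun x hx => hf hx
  choose! K t ht hft using hf'
  have hx_int : ∀ x ∈ U, x ∈ interior (t x) := fun x hx =>
    mem_interior_iff_mem_nhds.2 (by simpa [hU.nhdsWithin_eq hx] using ht x hx)
  obtain ⟨S, hSU, hS, hUS⟩ := TopologicalSpace.countable_cover_nhdsWithin fun x hx =>
    mem_nhdsWithin_of_mem_nhds (isOpen_interior.mem_nhds (hx_int x hx))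
  have hdiff : ∀ᵐ y ∂μ, ∀ x ∈ S, y ∈ interior (t x) →
      DifferentiableWithinAt ℝ f (interior (t x)) y :=
    (ae_ball_iff hS).2 fun x hx =>
      ((hft x (hSU hx)).mono interior_subset).ae_differentiableWithinAt_of_mem
  filter_upwards [hdiff] with y hy hyU
  obtain ⟨x, hxS, hyx⟩ := mem_iUnion₂.1 (hUS hyU)
  exact (hy x hxS hyx).differentiableAt (isOpen_interior.mem_nhds hyx)

theorem HasFDerivAt.le_of_eventually_le {F : Type*} [NormedAddCommGroup F] [NormedSpace ℝ F]
    {f : F → ℝ} {f' : F →L[ℝ] ℝ} {x v : F} {c : ℝ} (hf : HasFDerivAt f f' x)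
    (hle : ∀ᶠ t in 𝓝[>] 0, f (x + t • v) ≤ f x + t * c) : f' v ≤ c := by
  have hline : HasDerivAt (fun t : ℝ => f (x + t • v)) (f' v) 0 := by
    refine (by simpa using hf : HasFDerivAt f f' (x + (0 : ℝ) • v)).comp_hasDerivAt 0 ?_
    simpa using ((hasDerivAt_id (0 : ℝ)).smul_const v).const_add x
  have hslope : Tendsto (slope (fun t : ℝ => f (x + t • v)) 0) (𝓝[>] 0) (𝓝 (f' v)) :=
    (hasDerivAt_iff_tendsto_slope.1 hline).mono_left
      (nhdsWithin_mono 0 fun t (ht : 0 < t) => ht.ne')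
  refine le_of_tendsto hslope ?_
  filter_upwards [hle, self_mem_nhdsWithin] with t hft (ht : 0 < t)
  rw [slope_def_field, div_le_iff₀ (by simpa using ht)]
  simp only [zero_smul, add_zero, sub_zero]
  linarith

theorem tendsto_cobounded_atTop_of_superlinear {E : Type*} [SeminormedAddCommGroup E]
    {W : E → ℝ}
    (hW : Tendsto (fun x => W x / ‖x‖) (cocompact E) atTop) : Tendsto W (cobounded E) atTop := by
  refine ((hW.mono_left cobounded_le_cocompact).atTop_mul_atTop₀
    tendsto_norm_cobounded_atTop).congr' ?_
  filter_upwards [tendsto_norm_cobounded_atTop.eventually_gt_atTop 0] with x hx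
  exact div_mul_cancel₀ _ hx.ne'

theorem bddBelow_range_of_tendsto_cobounded {α : Type*} [PseudoMetricSpace α] [ProperSpace α]
    [Nonempty α] {W : α → ℝ} (hW : Continuous W) (hWtop : Tendsto W (cobounded α) atTop) :
    BddBelow (range W) := by
  obtain ⟨y₀, hy₀⟩ := hW.exists_forall_le (cobounded_eq_cocompact (α := α) ▸ hWtop)
  exact ⟨W y₀, forall_mem_range.2 hy₀⟩

theorem HasFDerivAt.fst_eq_neg_iSup {E : Type*} [NormedAddCommGroup E] [InnerProductSpace ℝ E]
    [CompleteSpace E] {Q : ℝ × E → ℝ} {L : ℝ × E →L[ℝ] ℝ} {p : ℝ × E} {W : E → ℝ}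
    (hQ : HasFDerivAt Q L p) (hsub : ∀ q, ∀ᶠ t in 𝓝[>] 0, Q (p + t • (1, q)) ≤ Q p + t * W q)
    {y₀ : E} (hsuper : ∀ᶠ t in 𝓝[>] 0, Q (p + t • (-1, -y₀)) ≤ Q p + t * -W y₀) :
    L (1, 0) = -⨆ y, ⟪y, (InnerProductSpace.toDual ℝ E).symm (L.comp (.inr ℝ ℝ E))⟫ - W y := by
  have hinner : ∀ y, ⟪y, (InnerProductSpace.toDual ℝ E).symm (L.comp (.inr ℝ ℝ E))⟫ = L (0, y) :=
    fun y => by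
      rw [real_inner_comm, InnerProductSpace.toDual_symm_apply, ContinuousLinearMap.comp_apply,
        ContinuousLinearMap.inr_apply]
  have hsplit : ∀ y : E, L (1, y) = L (1, 0) + L (0, y) := fun y => by
    rw [← map_add, Prod.mk_add_mk, add_zero, zero_add]
  have hupper : ∀ y, L (0, y) - W y ≤ -L (1, 0) := fun y => by
    linarith [hQ.le_of_eventually_le (hsub y), hsplit y]
  have hlower : -L (1, 0) ≤ L (0, y₀) - W y₀ := by
    have hneg : L (-1, -y₀) = -(L (1, 0) + L (0, y₀)) := by
      rw [← hsplit, ← map_neg, Prod.neg_mk]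
    linarith [hQ.le_of_eventually_le hsuper]
  simp only [hinner]
  rw [le_antisymm (ciSup_le hupper) (hlower.trans (le_ciSup ⟨_, forall_mem_range.2 hupper⟩ y₀)),
    neg_neg]

section NormedSpace

variable {E : Type*} [NormedAddCommGroup E] [NormedSpace ℝ E] {g W : E → ℝ}

theorem hopfLax_le (hg : ∀ x, 0 ≤ g x) (hW : BddBelow (range W)) {h : ℝ} (hh : 0 ≤ h)
    (x y : E) : hopfLax g W h x ≤ g (x - h • y) + h * W y := by
  obtain ⟨m, hm⟩ := hW
  refine ciInf_le ⟨h * m, forall_mem_range.2 fun z => ?_⟩ y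
  have := mul_le_mul_of_nonneg_left (hm (mem_range_self z)) hh
  linarith [hg (x - h • z)]

theorem IsHopfLaxMinimizer.hopfLax_eq {h : ℝ} {x y₀ : E} (hy₀ : IsHopfLaxMinimizer g W h x y₀) :
    hopfLax g W h x = g (x - h • y₀) + h * W y₀ :=
  le_antisymm (ciInf_le ⟨_, forall_mem_range.2 hy₀⟩ y₀) (le_ciInf hy₀)

theorem hopfLax_add_le (hg : ∀ x, 0 ≤ g x) (hW : BddBelow (range W)) (hconv : ConvexOn ℝ univ W)
    {h s : ℝ} (hh : 0 ≤ h) (hs : 0 < s) (x q : E) :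
    hopfLax g W (h + s) (x + s • q) ≤ hopfLax g W h x + s * W q := by
  have hhs : 0 < h + s := add_pos_of_nonneg_of_pos hh hs
  rw [← sub_le_iff_le_add]
  refine le_ciInf fun y => ?_
  set y' : E := (h / (h + s)) • y + (s / (h + s)) • q
  have hy' : x + s • q - (h + s) • y' = x - h • y := by
    simp only [y', smul_add, smul_smul, mul_div_cancel₀ _ hhs.ne']
    abel
  have hWy' : (h + s) * W y' ≤ h * W y + s * W q := by
    have : W y' ≤ h / (h + s) * W y + s / (h + s) * W q := by
      simpa only [smul_eq_mul] using hconv.2 (mem_univ y) (mem_univ q) (by positivity)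
        (by positivity) (by field_simp : h / (h + s) + s / (h + s) = 1)
    calc (h + s) * W y' ≤ (h + s) * (h / (h + s) * W y + s / (h + s) * W q) := by gcongr
      _ = h * W y + s * W q := by field_simp
  have := hopfLax_le hg hW hhs.le (x + s • q) y'
  rw [hy'] at this
  linarith

theorem IsHopfLaxMinimizer.hopfLax_sub_le (hg : ∀ x, 0 ≤ g x) (hW : BddBelow (range W)) {h t : ℝ}
    {x y₀ : E} (hy₀ : IsHopfLaxMinimizer g W h x y₀) (ht : t ≤ h) :
    hopfLax g W (h - t) (x - t • y₀) ≤ hopfLax g W h x - t * W y₀ := by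
  have := hopfLax_le hg hW (sub_nonneg.2 ht) (x - t • y₀) y₀
  rw [hy₀.hopfLax_eq, sub_sub, ← add_smul, add_sub_cancel] at *
  linarith

theorem lipschitzWith_snd_sub_fst_smul (y : E) :
    LipschitzWith (1 + ‖y‖₊) fun p : ℝ × E => p.2 - p.1 • y := by
  refine LipschitzWith.prod_snd.sub (LipschitzWith.of_dist_le_mul fun p q => ?_)
  rw [dist_eq_norm, ← sub_smul, norm_smul, ← dist_eq_norm, mul_comm, coe_nnnorm]
  exact mul_le_mul_of_nonneg_left (le_max_left _ _) (norm_nonneg y)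

theorem LipschitzOnWith.hopfLax_integrand {s : Set (ℝ × E)} {t : Set E} {Kg : NNReal}
    (hg : LipschitzOnWith Kg g t) (y : E) (hst : MapsTo (fun p : ℝ × E => p.2 - p.1 • y) s t) :
    LipschitzOnWith (Kg * (1 + ‖y‖₊) + ‖W y‖₊) (fun p : ℝ × E => g (p.2 - p.1 • y) + p.1 * W y)
      s := by
  refine (hg.comp (lipschitzWith_snd_sub_fst_smul y).lipschitzOnWith hst).add ?_
  refine LipschitzWith.lipschitzOnWith (LipschitzWith.of_dist_le_mul fun p q => ?_)
  rw [Real.dist_eq, ← sub_mul, abs_mul, ← Real.dist_eq, mul_comm, coe_nnnorm, Real.norm_eq_abs]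
  exact mul_le_mul_of_nonneg_left (le_max_left _ _) (abs_nonneg _)

/-- A minimizer does at least as well as the competitor `y = 0`, whose cost is bounded on `K`;
far out, `h * W y` alone is larger. -/
theorem exists_norm_le_of_isHopfLaxMinimizer (hg : Continuous g) (hg0 : ∀ x, 0 ≤ g x)
    (hWtop : Tendsto W (cobounded E) atTop) {K : Set (ℝ × E)} (hK : IsCompact K) {a : ℝ}
    (ha : 0 < a) (hKa : ∀ p ∈ K, a ≤ p.1) :
    ∃ ρ, ∀ p ∈ K, ∀ y₀, IsHopfLaxMinimizer g W p.1 p.2 y₀ → ‖y₀‖ ≤ ρ := by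
  obtain ⟨M, hM⟩ := hK.bddAbove_image (f := fun p : ℝ × E => g p.2 + p.1 * W 0)
    (by fun_prop : Continuous _).continuousOn
  set c := (|M| + 1) / a
  obtain ⟨ρ, hρ⟩ := (isBounded_compl_iff.2 (hWtop.eventually_ge_atTop c)).exists_norm_le
  refine ⟨ρ, fun p hp y₀ hy₀ => hρ y₀ fun hcW => ?_⟩
  have hc : 0 < c := by positivity
  have hac : |M| + 1 ≤ p.1 * W y₀ := calc
    |M| + 1 = a * c := (mul_div_cancel₀ _ ha.ne').symm
    _ ≤ p.1 * W y₀ := mul_le_mul (hKa p hp) hcW hc.le (ha.le.trans (hKa p hp))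
  have h0 := hy₀ 0
  rw [smul_zero, sub_zero] at h0
  linarith [hM (mem_image_of_mem _ hp), hg0 (p.2 - p.1 • y₀), le_abs_self M]

end NormedSpace

section ProperSpace

variable {E : Type*} [NormedAddCommGroup E] [NormedSpace ℝ E] [ProperSpace E] {g W : E → ℝ}

theorem exists_isHopfLaxMinimizer (hg : Continuous g) (hg0 : ∀ x, 0 ≤ g x) (hW : Continuous W)
    (hWtop : Tendsto W (cobounded E) atTop) {h : ℝ} (hh : 0 < h) (x : E) :
    ∃ y₀, IsHopfLaxMinimizer g W h x y₀ := by
  refine Continuous.exists_forall_le (by fun_prop) ?_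
  rw [← cobounded_eq_cocompact]
  exact tendsto_atTop_mono (fun y => le_add_of_nonneg_left (hg0 _)) (hWtop.const_mul_atTop hh)

theorem exists_lipschitzOnWith_hopfLax (hg : LocallyLipschitz g) (hg0 : ∀ x, 0 ≤ g x)
    (hW : Continuous W) (hWtop : Tendsto W (cobounded E) atTop) {K : Set (ℝ × E)}
    (hK : IsCompact K) {a : ℝ} (ha : 0 < a) (hKa : ∀ p ∈ K, a ≤ p.1) :
    ∃ C, LipschitzOnWith C (fun p : ℝ × E => hopfLax g W p.1 p.2) K := by
  have hWbdd := bddBelow_range_of_tendsto_cobounded hW hWtop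
  obtain ⟨ρ, hρ⟩ := exists_norm_le_of_isHopfLaxMinimizer hg.continuous hg0 hWtop hK ha hKa
  have hKρ := hK.prod (isCompact_closedBall (0 : E) ρ)
  obtain ⟨Kg, hKg⟩ := hg.locallyLipschitzOn.exists_lipschitzOnWith_of_compact
    (hKρ.image (f := fun q : (ℝ × E) × E => q.1.2 - q.1.1 • q.2) (by fun_prop))
  obtain ⟨MW, hMW⟩ := (isCompact_closedBall (0 : E) ρ).exists_bound_of_continuousOn
    hW.continuousOn
  refine ⟨Kg * (1 + ρ.toNNReal) + MW.toNNReal, LipschitzOnWith.of_forall_le_of_exists_eq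
    (φ := fun y p => g (p.2 - p.1 • y) + p.1 * W y)
    (fun y p hp => hopfLax_le hg0 hWbdd (ha.le.trans (hKa p hp)) p.2 y) fun p hp => ?_⟩
  obtain ⟨y₀, hy₀⟩ := exists_isHopfLaxMinimizer hg.continuous hg0 hW hWtop
    (ha.trans_le (hKa p hp)) p.2
  have hy₀ρ : y₀ ∈ closedBall 0 ρ := mem_closedBall_zero_iff.2 (hρ p hp y₀ hy₀)
  refine ⟨y₀, hy₀.hopfLax_eq, (hKg.hopfLax_integrand y₀ fun q hq =>
    mem_image_of_mem _ (mk_mem_prod hq hy₀ρ)).weaken ?_⟩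
  gcongr
  · simpa using Real.toNNReal_le_toNNReal (mem_closedBall_zero_iff.1 hy₀ρ)
  · rw [← norm_toNNReal]
    exact Real.toNNReal_le_toNNReal (hMW y₀ hy₀ρ)

theorem locallyLipschitzOn_hopfLax (hg : LocallyLipschitz g) (hg0 : ∀ x, 0 ≤ g x)
    (hW : Continuous W) (hWtop : Tendsto W (cobounded E) atTop) :
    LocallyLipschitzOn {p : ℝ × E | 0 < p.1} fun p => hopfLax g W p.1 p.2 := by
  intro p (hp : 0 < p.1)
  obtain ⟨C, hC⟩ := exists_lipschitzOnWith_hopfLax hg hg0 hW hWtop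
    (isCompact_closedBall p (p.1 / 2)) (half_pos hp) fun q hq => by
      have := (le_max_left _ _ : dist q.1 p.1 ≤ dist q p).trans (mem_closedBall.1 hq)
      rw [Real.dist_eq, abs_sub_le_iff] at this
      linarith
  exact ⟨C, closedBall p (p.1 / 2),
    mem_nhdsWithin_of_mem_nhds (closedBall_mem_nhds p (half_pos hp)), hC⟩

end ProperSpace

theorem hopfLax_hamiltonJacobi {E : Type*} [NormedAddCommGroup E] [InnerProductSpace ℝ E]
    [CompleteSpace E] {g W : E → ℝ} (hg0 : ∀ x, 0 ≤ g x) (hWbdd : BddBelow (range W))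
    (hconv : ConvexOn ℝ univ W) {p : ℝ × E} (hp : 0 < p.1) {y₀ : E}
    (hy₀ : IsHopfLaxMinimizer g W p.1 p.2 y₀) {L : ℝ × E →L[ℝ] ℝ}
    (hL : HasFDerivAt (fun p : ℝ × E => hopfLax g W p.1 p.2) L p) :
    L (1, 0) = -⨆ y, ⟪y, (InnerProductSpace.toDual ℝ E).symm (L.comp (.inr ℝ ℝ E))⟫ - W y := by
  refine hL.fst_eq_neg_iSup (fun q => ?_) (y₀ := y₀) ?_
  · filter_upwards [self_mem_nhdsWithin] with t (ht : 0 < t)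
    simpa using hopfLax_add_le hg0 hWbdd hconv hp.le ht p.2 q
  · filter_upwards [Ioo_mem_nhdsGT hp] with t ht
    simpa [← sub_eq_add_neg] using hy₀.hopfLax_sub_le hg0 hWbdd ht.2.le

/-- Hamilton–Jacobi equation: for `g` nonnegative locally Lipschitz and `W`
convex with superlinear growth, for a.e. `(h,x) ∈ (0,∞) × ℝⁿ` the map `Q_h^W(g)` is
differentiable in `h` and in `x` and `∂_h Q_h^W(g)(x) = -W*(∇_x Q_h^W(g)(x))`. -/
theorem Q_hamilton_jacobi (n : ℕ) (g W : EuclideanSpace ℝ (Fin n) → ℝ)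
    (hg_nonneg : ∀ x, 0 ≤ g x)
    (hg_lip : ∀ s : Set (EuclideanSpace ℝ (Fin n)), IsBounded s →
      ∃ K : NNReal, LipschitzOnWith K g s)
    (hW_conv : ConvexOn ℝ Set.univ W)
    (hW_super : Tendsto (fun x => W x / ‖x‖) (cocompact (EuclideanSpace ℝ (Fin n))) atTop) :
    ∀ᵐ p : ℝ × EuclideanSpace ℝ (Fin n), 0 < p.1 →
      ∃ (dh : ℝ) (dx : EuclideanSpace ℝ (Fin n)),
        HasDerivAt (fun h : ℝ =>
            ⨅ y : EuclideanSpace ℝ (Fin n), g (p.2 - h • y) + h * W y) dh p.1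
        ∧ HasGradientAt (fun x : EuclideanSpace ℝ (Fin n) =>
            ⨅ y : EuclideanSpace ℝ (Fin n), g (x - p.1 • y) + p.1 * W y) dx p.2
        ∧ dh = -(⨆ y : EuclideanSpace ℝ (Fin n), (⟪y, dx⟫ : ℝ) - W y) := by
  have hg : LocallyLipschitz g := fun x =>
    (hg_lip (ball x 1) isBounded_ball).imp fun _ hK => ⟨ball x 1, ball_mem_nhds x one_pos, hK⟩
  have hW : Continuous W := continuousOn_univ.1 (hW_conv.continuousOn isOpen_univ)
  have hWtop := tendsto_cobounded_atTop_of_superlinear hW_super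
  rw [Measure.volume_eq_prod]
  filter_upwards [(locallyLipschitzOn_hopfLax hg hg_nonneg hW hWtop).ae_differentiableAt
    (isOpen_lt continuous_const continuous_fst)] with p hdiff hp
  obtain ⟨y₀, hy₀⟩ := exists_isHopfLaxMinimizer hg.continuous hg_nonneg hW hWtop hp p.2
  have hL := (hdiff hp).hasFDerivAt
  have hdh := (hL.comp p.1 (hasFDerivAt_prodMk_left (𝕜 := ℝ) p.1 p.2)).hasDerivAt
  have hdx := (hL.comp p.2 (hasFDerivAt_prodMk_right (𝕜 := ℝ) p.1 p.2)).hasGradientAt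
  exact ⟨_, _, hdh, hdx, hopfLax_hamiltonJacobi hg_nonneg
    (bddBelow_range_of_tendsto_cobounded hW hWtop) hW_conv hp hy₀ hL⟩
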